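/- arXiv:1510.02623 — 6 statements merged into one kernel-verified Lean document; each statement's English description precedes it below -/
import Mathlib

section
/- For d, δ > 0, define the Student's t Stein operator L_{d,δ}g(x) = (δ² + x²)·g'(x) - (d-1)x·g(x). If f, h : ℝ → ℝ are smooth and L_{d-2k,δ}(f^{(k)})(x) = h^{(k)}(x) + k(d-k)·f^{(k-1)}(x) for all x (with Lf = h when k = 0), then L_{d-2(k+1),δ}(f^{(k+1)})(x) = h^{(k+1)}(x) + (k+1)(d-k-1)·f^{(k)}(x) for all x. -/
open Real

theorem studentT_stein_iterate (d δ : ℝ) (hd : 0 < d) (hδ : 0 < δ)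
    (f h : ℝ → ℝ) (hf : ContDiff ℝ (⊤ : ℕ∞) f) (hh : ContDiff ℝ (⊤ : ℕ∞) h) (k : ℕ)
    (H : ∀ x : ℝ, (δ ^ 2 + x ^ 2) * deriv (iteratedDeriv k f) x -
        (d - 2 * k - 1) * x * iteratedDeriv k f x =
      iteratedDeriv k h x + (k : ℝ) * (d - k) * iteratedDeriv (k - 1) f x) :
    ∀ x : ℝ, (δ ^ 2 + x ^ 2) * deriv (iteratedDeriv (k + 1) f) x -
        (d - 2 * (k + 1) - 1) * x * iteratedDeriv (k + 1) f x =
      iteratedDeriv (k + 1) h x + ((k : ℝ) + 1) * (d - k - 1) * iteratedDeriv k f x := by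
  have smooth : ∀ (g : ℝ → ℝ), ContDiff ℝ (⊤ : ℕ∞) g → ∀ n, ContDiff ℝ (⊤ : ℕ∞) (iteratedDeriv n g) := by
    intro g hg n
    induction n with
    | zero => simpa [iteratedDeriv_zero] using hg.of_le (by simp)
    | succ n ih => rw [iteratedDeriv_succ]; exact (contDiff_infty_iff_deriv.mp ih).2
  have hfd : ∀ n, Differentiable ℝ (iteratedDeriv n f) := fun n =>
    (smooth f hf n).differentiable (by simp)
  have hhd : ∀ n, Differentiable ℝ (iteratedDeriv n h) := fun n =>
    (smooth h hh n).differentiable (by simp)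
  have hD : ∀ (n : ℕ) (x : ℝ), HasDerivAt (iteratedDeriv n f) (iteratedDeriv (n + 1) f x) x := by
    intro n x
    rw [iteratedDeriv_succ]
    exact (hfd n x).hasDerivAt
  intro x
  have key : deriv (fun y => (δ ^ 2 + y ^ 2) * deriv (iteratedDeriv k f) y -
      (d - 2 * k - 1) * y * iteratedDeriv k f y) x =
      deriv (fun y => iteratedDeriv k h y + (k : ℝ) * (d - k) * iteratedDeriv (k - 1) f y) x := by
    congr 1
    funext y
    exact H y
  have hA : HasDerivAt (fun y : ℝ => δ ^ 2 + y ^ 2) (2 * x) x := by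
    simpa using ((hasDerivAt_pow 2 x).const_add (δ ^ 2))
  have hL : HasDerivAt (fun y => (δ ^ 2 + y ^ 2) * deriv (iteratedDeriv k f) y -
      (d - 2 * k - 1) * y * iteratedDeriv k f y)
      ((2 * x) * iteratedDeriv (k + 1) f x + (δ ^ 2 + x ^ 2) * iteratedDeriv (k + 2) f x -
        ((d - 2 * k - 1) * iteratedDeriv k f x + ((d - 2 * k - 1) * x) * iteratedDeriv (k + 1) f x)) x := by
    have h1 : HasDerivAt (fun y => (δ ^ 2 + y ^ 2) * deriv (iteratedDeriv k f) y)
        ((2 * x) * iteratedDeriv (k + 1) f x + (δ ^ 2 + x ^ 2) * iteratedDeriv (k + 2) f x) x := by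
      have hB : HasDerivAt (fun y => deriv (iteratedDeriv k f) y) (iteratedDeriv (k + 2) f x) x := by
        have := hD (k + 1) x
        rw [iteratedDeriv_succ (n := k)] at this
        exact this
      have := hA.mul hB
      rw [iteratedDeriv_succ (n := k)]
      exact this
    have h2 : HasDerivAt (fun y => (d - 2 * k - 1) * y * iteratedDeriv k f y)
        ((d - 2 * k - 1) * iteratedDeriv k f x + ((d - 2 * k - 1) * x) * iteratedDeriv (k + 1) f x) x := by
      have := ((hasDerivAt_id x).const_mul (d - 2 * k - 1)).mul (hD k x)
      exact this.congr_deriv (by simp)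
    exact h1.sub h2
  have hR : HasDerivAt (fun y => iteratedDeriv k h y + (k : ℝ) * (d - k) * iteratedDeriv (k - 1) f y)
      (iteratedDeriv (k + 1) h x + (k : ℝ) * (d - k) * iteratedDeriv k f x) x := by
    have h3 : HasDerivAt (iteratedDeriv k h) (iteratedDeriv (k + 1) h x) x := by
      rw [iteratedDeriv_succ]; exact (hhd k x).hasDerivAt
    rcases k with _ | n
    · simpa using hhd 0 x
    · have h4 := (hD n x).const_mul ((n + 1 : ℝ) * (d - (n + 1)))
      have h5 := h3.add h4
      simp only [Nat.succ_sub_one, Nat.add_sub_cancel, Nat.cast_add, Nat.cast_one]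
      exact h5
  rw [hL.deriv, hR.deriv] at key
  have hgoal : deriv (iteratedDeriv (k + 1) f) x = iteratedDeriv (k + 2) f x := (hD (k + 1) x).deriv
  rw [hgoal]
  push_cast at key ⊢
  linear_combination key
end

section
/- For α, β > 0, define the inverse-gamma Stein operator L_{α,β}g(x) = x²·g'(x) + (β - (α-1)x)·g(x). If f, h are smooth real functions and L_{α-2k,β}(f^{(k)})(x) = h^{(k)}(x) + k(α-k)·f^{(k-1)}(x) for all x (with Lf = h when k = 0), then L_{α-2(k+1),β}(f^{(k+1)})(x) = h^{(k+1)}(x) + (k+1)(α-k-1)·f^{(k)}(x) for all x. -/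
open Real

theorem invGamma_stein_iterate (a b : ℝ) (ha : 0 < a) (hb : 0 < b)
    (f h : ℝ → ℝ) (hf : ContDiff ℝ (⊤ : ℕ∞) f) (hh : ContDiff ℝ (⊤ : ℕ∞) h) (k : ℕ)
    (H : ∀ x : ℝ, x ^ 2 * deriv (iteratedDeriv k f) x +
        (b - (a - 2 * k - 1) * x) * iteratedDeriv k f x =
      iteratedDeriv k h x + (k : ℝ) * (a - k) * iteratedDeriv (k - 1) f x) :
    ∀ x : ℝ, x ^ 2 * deriv (iteratedDeriv (k + 1) f) x +
        (b - (a - 2 * (k + 1) - 1) * x) * iteratedDeriv (k + 1) f x =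
      iteratedDeriv (k + 1) h x + ((k : ℝ) + 1) * (a - k - 1) * iteratedDeriv k f x := by
  intro x
  have hfd : ∀ n : ℕ, Differentiable ℝ (iteratedDeriv n f) := fun n =>
    hf.differentiable_iteratedDeriv n (by exact_mod_cast lt_top_iff_ne_top.2 (by simp))
  have hhd : ∀ n : ℕ, Differentiable ℝ (iteratedDeriv n h) := fun n =>
    hh.differentiable_iteratedDeriv n (by exact_mod_cast lt_top_iff_ne_top.2 (by simp))
  have hg : ∀ (n : ℕ) (y : ℝ), HasDerivAt (iteratedDeriv n f) (iteratedDeriv (n + 1) f y) y := by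
    intro n y
    rw [iteratedDeriv_succ]
    exact ((hfd n).differentiableAt).hasDerivAt
  have hgh : ∀ (n : ℕ) (y : ℝ), HasDerivAt (iteratedDeriv n h) (iteratedDeriv (n + 1) h y) y := by
    intro n y
    rw [iteratedDeriv_succ]
    exact ((hhd n).differentiableAt).hasDerivAt
  -- derivative of LHS of H (with deriv rewritten as iteratedDeriv (k+1))
  have hL : HasDerivAt (fun y => y ^ 2 * iteratedDeriv (k + 1) f y +
      (b - (a - 2 * k - 1) * y) * iteratedDeriv k f y)
      ((2 * x) * iteratedDeriv (k + 1) f x + x ^ 2 * iteratedDeriv (k + 2) f x +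
        (-(a - 2 * k - 1)) * iteratedDeriv k f x +
        (b - (a - 2 * k - 1) * x) * iteratedDeriv (k + 1) f x) x := by
    have h1 : HasDerivAt (fun y : ℝ => y ^ 2) (2 * x) x := by
      simpa using hasDerivAt_pow 2 x
    have h2 : HasDerivAt (fun y : ℝ => b - (a - 2 * k - 1) * y) (-(a - 2 * k - 1)) x := by
      simpa using (hasDerivAt_id x).const_mul (a - 2 * k - 1) |>.const_sub b
    have := (h1.mul (hg (k + 1) x)).add (h2.mul (hg k x))
    refine this.congr_deriv ?_
    ring
  have hRterm : HasDerivAt (fun y => (k : ℝ) * (a - k) * iteratedDeriv (k - 1) f y)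
      ((k : ℝ) * (a - k) * iteratedDeriv k f x) x := by
    cases k with
    | zero => simpa using hasDerivAt_const x (0 : ℝ)
    | succ m =>
      have := (hg m x).const_mul ((m + 1 : ℝ) * (a - (m + 1)))
      simpa [Nat.succ_sub_one] using this
  have hR : HasDerivAt (fun y => iteratedDeriv k h y + (k : ℝ) * (a - k) * iteratedDeriv (k - 1) f y)
      (iteratedDeriv (k + 1) h x + (k : ℝ) * (a - k) * iteratedDeriv k f x) x :=
    (hgh k x).add hRterm
  have hfun : (fun y => y ^ 2 * iteratedDeriv (k + 1) f y +
      (b - (a - 2 * k - 1) * y) * iteratedDeriv k f y)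
      = (fun y => iteratedDeriv k h y + (k : ℝ) * (a - k) * iteratedDeriv (k - 1) f y) := by
    funext y
    rw [← H y, iteratedDeriv_succ]
  rw [hfun] at hL
  have hEq := hL.unique hR
  rw [show deriv (iteratedDeriv (k + 1) f) = iteratedDeriv (k + 2) f from
    (iteratedDeriv_succ (n := k + 1)).symm]
  push_cast at hEq ⊢
  linear_combination hEq
end

section
/- Let d > 0, δ > 0 and k ≥ 1 with d - 2k > 0. Suppose nonnegative reals F₁, F₃, F₅, ..., F_{2k+1} (odd indices) and G₀, G₂, ..., G_{2k} satisfy F₁ ≤ (2/δ²)·G₀ and F_{2j+1} ≤ (2/δ²)·(G_{2j} + 2j(d-2j)·F_{2j-1}) for 1 ≤ j ≤ k. Then F_{2k+1} ≤ Σ_{j=0}^{k} (2/δ²)^{k-j+1} · ((2k)!!/(2j)!!) · (d-2k)·(d-2k+2)···(d-2j-2) · G_{2j}, where the product (d-2k)_{k-j,2} = ∏_{i=0}^{k-j-1}(d-2k+2i) is taken to be 1 when j = k, and m!! denotes the double factorial with 0!! = 1. -/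
open Real Nat Finset

/-!
Unrolling `F_{2n+1} ≤ a (G_{2n} + c_n F_{2n-1})` with `a = 2/δ²` and `c_i = 2i(d - 2i) ≥ 0` gives
`F_{2k+1} ≤ ∑_j a^{k-j+1} (∏_{j<i≤k} c_i) G_{2j}`, and the product of the `c_i` splits into
`∏ 2i = (2k)!!/(2j)!!` and `∏ (d - 2i) = (d-2k)(d-2k+2)⋯(d-2j-2)`.
-/

section LinearRecursion

variable {R : Type*} [CommSemiring R] [PartialOrder R] [IsOrderedRing R]

theorem le_sum_pow_mul_prod_of_le_mul_add {a : R} (ha : 0 ≤ a) {c f g : ℕ → R} {n : ℕ}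
    (hc : ∀ i ≤ n, 0 ≤ c i) (h0 : f 0 ≤ a * g 0)
    (hsucc : ∀ i < n, f (i + 1) ≤ a * (g (i + 1) + c (i + 1) * f i)) :
    f n ≤ ∑ j ∈ range (n + 1), a ^ (n - j + 1) * (∏ i ∈ Ioc j n, c i) * g j := by
  induction n with
  | zero => simpa using h0
  | succ n ih =>
    have ih := ih (fun i hi => hc i (by omega)) (fun i hi => hsucc i (by omega))
    have hterm : ∀ j ∈ range (n + 1),
        a ^ (n + 1 - j + 1) * (∏ i ∈ Ioc j (n + 1), c i) * g j =
          a * c (n + 1) * (a ^ (n - j + 1) * (∏ i ∈ Ioc j n, c i) * g j) := by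
      intro j hj
      rw [Nat.sub_add_comm (mem_range_succ_iff.mp hj), pow_succ,
        prod_Ioc_succ_top (mem_range_succ_iff.mp hj)]
      ring
    calc f (n + 1) ≤ a * (g (n + 1) + c (n + 1) * f n) := hsucc n n.lt_succ_self
      _ ≤ a * (g (n + 1) + c (n + 1) *
            ∑ j ∈ range (n + 1), a ^ (n - j + 1) * (∏ i ∈ Ioc j n, c i) * g j) := by
        gcongr
        exact hc (n + 1) le_rfl
      _ = _ := by
        rw [sum_range_succ _ (n + 1), sum_congr rfl hterm, ← mul_sum]
        simp only [Nat.sub_self, zero_add, pow_one, Ioc_self, prod_empty]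
        ring

end LinearRecursion

theorem prod_Ioc_two_mul_mul_sub_two_mul (d : ℝ) {j n : ℕ} (hjn : j ≤ n) :
    ∏ i ∈ Ioc j n, 2 * (i : ℝ) * (d - 2 * i) =
      ((2 * n)‼ : ℝ) / ((2 * j)‼ : ℝ) * ∏ i ∈ range (n - j), (d - 2 * n + 2 * i) := by
  induction n, hjn using Nat.le_induction with
  | base =>
    have : ((2 * j)‼ : ℝ) ≠ 0 := by exact_mod_cast (doubleFactorial_pos _).ne'
    simp [this]
  | succ n hjn ih =>
    rw [prod_Ioc_succ_top hjn, ih, Nat.sub_add_comm hjn, prod_range_succ',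
      show 2 * (n + 1) = 2 * n + 2 by ring, doubleFactorial_add_two]
    push_cast
    ring_nf

theorem studentT_odd_recursion_general (d δ : ℝ) (k : ℕ)
    (hdk : 0 < d - 2 * k) (F G : ℕ → ℝ)
    (h1 : F 1 ≤ 2 / δ ^ 2 * G 0)
    (hrec : ∀ j, 1 ≤ j → j ≤ k →
      F (2 * j + 1) ≤ 2 / δ ^ 2 * (G (2 * j) + 2 * j * (d - 2 * j) * F (2 * j - 1))) :
    F (2 * k + 1) ≤
      ∑ j ∈ Finset.range (k + 1),
        (2 / δ ^ 2) ^ (k - j + 1) * (((2 * k)‼ : ℝ) / ((2 * j)‼ : ℝ)) *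
          (∏ i ∈ Finset.range (k - j), (d - 2 * k + 2 * i)) * G (2 * j) := by
  have hc : ∀ i ≤ k, 0 ≤ 2 * (i : ℝ) * (d - 2 * i) := fun i hi => by
    have : (i : ℝ) ≤ k := by exact_mod_cast hi
    have : 0 ≤ d - 2 * i := by linarith
    positivity
  have hsucc : ∀ i < k, F (2 * (i + 1) + 1) ≤
      2 / δ ^ 2 * (G (2 * (i + 1)) + 2 * ((i + 1 : ℕ) : ℝ) * (d - 2 * (i + 1 : ℕ)) *
        F (2 * i + 1)) := fun i hi => by
    simpa only [show 2 * (i + 1) - 1 = 2 * i + 1 by omega] using hrec (i + 1) (by omega) hi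
  refine (le_sum_pow_mul_prod_of_le_mul_add (f := fun n => F (2 * n + 1))
    (g := fun n => G (2 * n)) (by positivity) hc h1 hsucc).trans_eq (sum_congr rfl fun j hj => ?_)
  rw [prod_Ioc_two_mul_mul_sub_two_mul d (mem_range_succ_iff.mp hj)]
  ring

theorem studentT_odd_recursion (d δ : ℝ) (hd : 0 < d) (hδ : 0 < δ) (k : ℕ) (hk : 1 ≤ k)
    (hdk : 0 < d - 2 * k) (F G : ℕ → ℝ)
    (hF : ∀ j ≤ k, 0 ≤ F (2 * j + 1)) (hG : ∀ j ≤ k, 0 ≤ G (2 * j))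
    (h1 : F 1 ≤ 2 / δ ^ 2 * G 0)
    (hrec : ∀ j, 1 ≤ j → j ≤ k →
      F (2 * j + 1) ≤ 2 / δ ^ 2 * (G (2 * j) + 2 * j * (d - 2 * j) * F (2 * j - 1))) :
    F (2 * k + 1) ≤
      ∑ j ∈ Finset.range (k + 1),
        (2 / δ ^ 2) ^ (k - j + 1) * (((2 * k)‼ : ℝ) / ((2 * j)‼ : ℝ)) *
          (∏ i ∈ Finset.range (k - j), (d - 2 * k + 2 * i)) * G (2 * j) :=
  studentT_odd_recursion_general d δ k hdk F G h1 hrec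
end

section
/- Let p(x) = c₁·exp(-x⁴/12) with c₁ = √2/(3^{1/4}Γ(1/4)). Then for every x ∈ ℝ, (∫_x^∞ t·p(t) dt)/p(x) ≤ min((√(3π))/2, 3/x²) · 1 (with the convention 3/0² = +∞), i.e. the ratio is at most √(3π)/2 and also at most 3/x² for x ≠ 0. -/
open Real MeasureTheory Set Filter

noncomputable def quarticConst : ℝ := Real.sqrt 2 / ((3 : ℝ) ^ ((1 : ℝ) / 4) * Real.Gamma (1 / 4))

noncomputable def quarticDensity (x : ℝ) : ℝ := quarticConst * Real.exp (-x ^ 4 / 12)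

namespace QuarticAux

lemma const_pos : 0 < quarticConst := by
  unfold quarticConst
  apply div_pos (Real.sqrt_pos.mpr (by norm_num))
  exact mul_pos (Real.rpow_pos_of_pos (by norm_num) _)
    (Real.Gamma_pos_of_pos (by norm_num))

lemma density_pos (x : ℝ) : 0 < quarticDensity x :=
  mul_pos const_pos (Real.exp_pos _)

lemma density_even (x : ℝ) : quarticDensity (-x) = quarticDensity x := by
  unfold quarticDensity
  rw [show (-x) ^ 4 = x ^ 4 by ring]

lemma gauss_int : Integrable (fun u : ℝ => Real.exp (-u ^ 2 / 12)) := by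
  have h := integrable_exp_neg_mul_sq (b := 1/12) (by norm_num)
  refine h.congr (Filter.Eventually.of_forall fun u => ?_)
  ring_nf

lemma gauss_val : ∫ u in Ioi (0:ℝ), Real.exp (-u ^ 2 / 12) = Real.sqrt (3 * π) := by
  have h := integral_gaussian_Ioi (1/12)
  have e : ∀ u : ℝ, -(1/12) * u ^ 2 = -u ^ 2 / 12 := fun u => by ring
  simp only [e] at h
  rw [h, show π / (1/12 : ℝ) = 4 * (3 * π) by ring, Real.sqrt_mul (by norm_num) (3*π),
    show Real.sqrt 4 = 2 by rw [show (4:ℝ) = 2^2 by norm_num, Real.sqrt_sq (by norm_num)]]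
  ring

lemma tailA {a : ℝ} (ha : 0 ≤ a) :
    ∫ u in Ioi a, Real.exp (-u ^ 2 / 12) ≤ Real.sqrt (3 * π) * Real.exp (-a ^ 2 / 12) := by
  have hshift : (∫ u in Ioi a, Real.exp (-u ^ 2 / 12))
      = ∫ v in Ioi (0:ℝ), Real.exp (-(v + a) ^ 2 / 12) := by
    have hmp : MeasurePreserving (fun v : ℝ => v + a) volume volume :=
      measurePreserving_add_right volume a
    have hemb : MeasurableEmbedding (fun v : ℝ => v + a) :=
      (MeasurableEquiv.addRight a).measurableEmbedding
    have := hmp.setIntegral_preimage_emb hemb (fun u => Real.exp (-u ^ 2 / 12)) (Ioi a)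
    rw [← this]; congr 1; ext v; simp
  rw [hshift]
  have hle : ∀ v ∈ Ioi (0:ℝ), Real.exp (-(v + a) ^ 2 / 12)
      ≤ Real.exp (-a ^ 2 / 12) * Real.exp (-v ^ 2 / 12) := by
    intro v hv
    rw [← Real.exp_add, Real.exp_le_exp]
    have : 0 ≤ v := le_of_lt hv
    nlinarith
  have hint2 : IntegrableOn (fun v : ℝ => Real.exp (-a ^ 2 / 12) * Real.exp (-v ^ 2 / 12))
      (Ioi 0) := (gauss_int.const_mul _).integrableOn
  have hint1 : IntegrableOn (fun v : ℝ => Real.exp (-(v + a) ^ 2 / 12)) (Ioi 0) := by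
    refine Integrable.mono' hint2 ?_ ?_
    · exact (Continuous.aestronglyMeasurable (by continuity)).restrict
    · filter_upwards [ae_restrict_mem measurableSet_Ioi] with v hv
      rw [Real.norm_eq_abs, abs_of_pos (Real.exp_pos _)]
      exact hle v hv
  calc ∫ v in Ioi (0:ℝ), Real.exp (-(v + a) ^ 2 / 12)
      ≤ ∫ v in Ioi (0:ℝ), Real.exp (-a ^ 2 / 12) * Real.exp (-v ^ 2 / 12) :=
        setIntegral_mono_on hint1 hint2 measurableSet_Ioi hle
    _ = Real.exp (-a ^ 2 / 12) * ∫ v in Ioi (0:ℝ), Real.exp (-v ^ 2 / 12) := by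
        rw [integral_const_mul]
    _ = Real.sqrt (3 * π) * Real.exp (-a ^ 2 / 12) := by rw [gauss_val]; ring

lemma hasDeriv_m (u : ℝ) : HasDerivAt (fun u : ℝ => -6 * Real.exp (-u ^ 2 / 12))
    (u * Real.exp (-u ^ 2 / 12)) u := by
  have h : HasDerivAt (fun u : ℝ => -u ^ 2 / 12) (-(2 * u) / 12) u :=
    ((hasDerivAt_pow 2 u).neg.div_const 12).congr_deriv (by ring)
  exact (h.exp.const_mul (-6 : ℝ)).congr_deriv (by ring)

lemma tend_exp : Tendsto (fun u : ℝ => -6 * Real.exp (-u ^ 2 / 12)) atTop (nhds 0) := by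
  have h1 : Tendsto (fun u : ℝ => -u ^ 2 / 12) atTop atBot :=
    Tendsto.atBot_div_const (by norm_num)
      (tendsto_neg_atBot_iff.mpr (tendsto_pow_atTop two_ne_zero))
  simpa using (Real.tendsto_exp_atBot.comp h1).const_mul (-6 : ℝ)

lemma moment_int {a : ℝ} (ha : 0 < a) :
    IntegrableOn (fun u : ℝ => u * Real.exp (-u ^ 2 / 12)) (Ioi a) := by
  refine integrableOn_Ioi_deriv_of_nonneg' (fun u _ => hasDeriv_m u) ?_ tend_exp
  intro u hu
  exact mul_nonneg (le_of_lt (lt_trans ha hu)) (Real.exp_pos _).le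

lemma moment_val {a : ℝ} (ha : 0 < a) :
    ∫ u in Ioi a, u * Real.exp (-u ^ 2 / 12) = 6 * Real.exp (-a ^ 2 / 12) := by
  rw [integral_Ioi_of_hasDerivAt_of_tendsto' (fun u _ => hasDeriv_m u) (moment_int ha) tend_exp]
  ring

lemma tailB {a : ℝ} (ha : 0 < a) :
    ∫ u in Ioi a, Real.exp (-u ^ 2 / 12) ≤ (6 / a) * Real.exp (-a ^ 2 / 12) := by
  have hle : ∀ u ∈ Ioi a, Real.exp (-u ^ 2 / 12) ≤ (1/a) * (u * Real.exp (-u ^ 2 / 12)) := by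
    intro u hu
    have hua : a ≤ u := le_of_lt hu
    rw [show (1/a) * (u * Real.exp (-u ^ 2 / 12)) = (u/a) * Real.exp (-u ^ 2 / 12) by ring]
    nth_rewrite 1 [← one_mul (Real.exp (-u ^ 2 / 12))]
    gcongr ?_ * _
    rw [le_div_iff₀ ha]; linarith
  have hint2 : IntegrableOn (fun u : ℝ => (1/a) * (u * Real.exp (-u ^ 2 / 12))) (Ioi a) :=
    (moment_int ha).const_mul _
  have hint1 : IntegrableOn (fun u : ℝ => Real.exp (-u ^ 2 / 12)) (Ioi a) :=
    gauss_int.integrableOn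
  calc ∫ u in Ioi a, Real.exp (-u ^ 2 / 12)
      ≤ ∫ u in Ioi a, (1/a) * (u * Real.exp (-u ^ 2 / 12)) :=
        setIntegral_mono_on hint1 hint2 measurableSet_Ioi hle
    _ = (1/a) * ∫ u in Ioi a, u * Real.exp (-u ^ 2 / 12) := integral_const_mul _ _
    _ = (6 / a) * Real.exp (-a ^ 2 / 12) := by rw [moment_val ha]; ring

lemma hasDeriv_c (t : ℝ) : HasDerivAt (fun t : ℝ => -3 * Real.exp (-t ^ 4 / 12))
    (t ^ 3 * Real.exp (-t ^ 4 / 12)) t := by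
  have h : HasDerivAt (fun t : ℝ => -t ^ 4 / 12) (-(4 * t ^ 3) / 12) t :=
    ((hasDerivAt_pow 4 t).neg.div_const 12).congr_deriv (by ring)
  exact (h.exp.const_mul (-3 : ℝ)).congr_deriv (by ring)

lemma tend_exp4 : Tendsto (fun t : ℝ => -3 * Real.exp (-t ^ 4 / 12)) atTop (nhds 0) := by
  have h1 : Tendsto (fun t : ℝ => -t ^ 4 / 12) atTop atBot :=
    Tendsto.atBot_div_const (by norm_num)
      (tendsto_neg_atBot_iff.mpr (tendsto_pow_atTop (by norm_num)))
  simpa using (Real.tendsto_exp_atBot.comp h1).const_mul (-3 : ℝ)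

lemma cube_int : IntegrableOn (fun t : ℝ => t ^ 3 * Real.exp (-t ^ 4 / 12)) (Ioi 0) := by
  refine integrableOn_Ioi_deriv_of_nonneg' (fun t _ => hasDeriv_c t) ?_ tend_exp4
  intro t ht
  exact mul_nonneg (pow_nonneg (le_of_lt ht) 3) (Real.exp_pos _).le

lemma lin_int : IntegrableOn (fun t : ℝ => t * Real.exp (-t ^ 4 / 12)) (Ici 0) := by
  rw [integrableOn_Ici_iff_integrableOn_Ioi]
  have hbig : IntegrableOn (fun t : ℝ => t ^ 3 * Real.exp (-t ^ 4 / 12)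
      + Real.exp (1/12) * Real.exp (-t ^ 2 / 12)) (Ioi 0) :=
    cube_int.add (gauss_int.const_mul _).integrableOn
  refine Integrable.mono' hbig ?_ ?_
  · exact (Continuous.aestronglyMeasurable (by continuity)).restrict
  · filter_upwards [ae_restrict_mem measurableSet_Ioi] with t ht
    have ht0 : (0:ℝ) ≤ t := le_of_lt ht
    rw [Real.norm_eq_abs, abs_of_nonneg (mul_nonneg ht0 (Real.exp_pos _).le)]
    have h1 : t * Real.exp (-t ^ 4 / 12) ≤ t ^ 3 * Real.exp (-t ^ 4 / 12)
        + Real.exp (-t ^ 4 / 12) := by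
      have : t ≤ t ^ 3 + 1 := by
        nlinarith [mul_nonneg ht0 (sq_nonneg (t-1)), sq_nonneg (2*t-1)]
      nlinarith [Real.exp_pos (-t ^ 4 / 12)]
    have h2 : Real.exp (-t ^ 4 / 12) ≤ Real.exp (1/12) * Real.exp (-t ^ 2 / 12) := by
      rw [← Real.exp_add, Real.exp_le_exp]
      nlinarith [sq_nonneg (t^2 - 1)]
    linarith

lemma subst {x : ℝ} (hx : 0 ≤ x) :
    ∫ t in Ioi x, t * Real.exp (-t ^ 4 / 12)
      = (1/2) * ∫ u in Ioi (x ^ 2), Real.exp (-u ^ 2 / 12) := by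
  have key := MeasureTheory.integral_comp_mul_deriv_Ioi (f := fun t : ℝ => t ^ 2)
    (f' := fun t : ℝ => 2 * t) (g := fun u : ℝ => (1/2) * Real.exp (-u ^ 2 / 12)) (a := x)
    (Continuous.continuousOn (by continuity))
    (tendsto_pow_atTop two_ne_zero)
    (fun t _ => ((hasDerivAt_pow 2 t).congr_deriv (by ring)).hasDerivWithinAt)
    (Continuous.continuousOn (by continuity))
    ((gauss_int.const_mul _).integrableOn)
    ?_
  · simp only [Function.comp] at key
    rw [← integral_const_mul, ← key]
    refine setIntegral_congr_fun measurableSet_Ioi fun t _ => ?_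
    rw [show ((t:ℝ)^2)^2 = t^4 by ring]
    ring
  · have h : IntegrableOn (fun t : ℝ => t * Real.exp (-t ^ 4 / 12)) (Ici x) :=
      lin_int.mono_set (Ici_subset_Ici.mpr hx)
    refine h.congr_fun (fun t _ => ?_) measurableSet_Ici
    simp only [Function.comp]
    rw [show ((t:ℝ)^2)^2 = t^4 by ring]
    ring

lemma main_int {x : ℝ} (hx : 0 ≤ x) :
    ∫ t in Ioi x, t * quarticDensity t
      = quarticConst * ((1/2) * ∫ u in Ioi (x ^ 2), Real.exp (-u ^ 2 / 12)) := by
  rw [← subst hx, ← integral_const_mul]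
  refine setIntegral_congr_fun measurableSet_Ioi fun t _ => ?_
  unfold quarticDensity
  ring

lemma odd_reduce {x : ℝ} (hx : x < 0) :
    ∫ t in Ioi x, t * quarticDensity t = ∫ t in Ioi (-x), t * quarticDensity t := by
  have hxle : x ≤ -x := by linarith
  have hcont : Continuous (fun t : ℝ => t * quarticDensity t) := by
    unfold quarticDensity; continuity
  have hunion : Ioc x (-x) ∪ Ioi (-x) = Ioi x := Ioc_union_Ioi_eq_Ioi hxle
  have hdisj : Disjoint (Ioc x (-x)) (Ioi (-x)) := by
    apply Set.disjoint_left.mpr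
    intro t ht ht'
    exact absurd ht' (not_lt.mpr ht.2)
  have hint1 : IntegrableOn (fun t : ℝ => t * quarticDensity t) (Ioc x (-x)) :=
    hcont.integrableOn_Ioc
  have hint2 : IntegrableOn (fun t : ℝ => t * quarticDensity t) (Ioi (-x)) := by
    have h : IntegrableOn (fun t : ℝ => quarticConst * (t * Real.exp (-t ^ 4 / 12)))
        (Ioi (-x)) := by
      refine (lin_int.mono_set ?_).const_mul _
      exact Ioi_subset_Ici (by linarith)
    refine h.congr_fun (fun t _ => ?_) measurableSet_Ioi
    unfold quarticDensity; ring
  rw [← hunion, setIntegral_union hdisj measurableSet_Ioi hint1 hint2]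
  have hzero : ∫ t in Ioc x (-x), t * quarticDensity t = 0 := by
    rw [← intervalIntegral.integral_of_le hxle]
    have hsplit := intervalIntegral.integral_add_adjacent_intervals
      (a := x) (b := 0) (c := -x) (f := fun t => t * quarticDensity t)
      (hcont.intervalIntegrable x 0 : IntervalIntegrable _ volume x 0)
      (hcont.intervalIntegrable 0 (-x) : IntervalIntegrable _ volume 0 (-x))
    rw [← hsplit]
    have hneg : ∫ t in (0:ℝ)..(-x), (fun t => t * quarticDensity t) (-t)
        = ∫ t in x..(0:ℝ), t * quarticDensity t := by
      rw [intervalIntegral.integral_comp_neg (fun t => t * quarticDensity t)]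
      norm_num
    have heq : ∫ t in (0:ℝ)..(-x), (fun t => t * quarticDensity t) (-t)
        = -∫ t in (0:ℝ)..(-x), t * quarticDensity t := by
      rw [← intervalIntegral.integral_neg]
      refine intervalIntegral.integral_congr fun t _ => ?_
      simp only
      rw [density_even]
      ring
    rw [← hneg, heq]
    ring
  rw [hzero, zero_add]

lemma main_bound {x : ℝ} (hx : 0 ≤ x) :
    (∫ t in Ioi x, t * quarticDensity t) ≤ Real.sqrt (3 * π) / 2 * quarticDensity x ∧
    (x ≠ 0 → (∫ t in Ioi x, t * quarticDensity t) ≤ 3 / x ^ 2 * quarticDensity x) := by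
  rw [main_int hx]
  have hc := const_pos
  have hx2 : (x ^ 2) ^ 2 = x ^ 4 := by ring
  constructor
  · have hA := tailA (a := x ^ 2) (sq_nonneg x)
    rw [hx2] at hA
    unfold quarticDensity
    calc quarticConst * ((1/2) * ∫ u in Ioi (x ^ 2), Real.exp (-u ^ 2 / 12))
        ≤ quarticConst * ((1/2) * (Real.sqrt (3 * π) * Real.exp (-x ^ 4 / 12))) := by
          gcongr
      _ = Real.sqrt (3 * π) / 2 * (quarticConst * Real.exp (-x ^ 4 / 12)) := by ring
  · intro hxne
    have hx2pos : 0 < x ^ 2 := by positivity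
    have hB := tailB hx2pos
    rw [hx2] at hB
    unfold quarticDensity
    calc quarticConst * ((1/2) * ∫ u in Ioi (x ^ 2), Real.exp (-u ^ 2 / 12))
        ≤ quarticConst * ((1/2) * ((6 / x ^ 2) * Real.exp (-x ^ 4 / 12))) := by
          gcongr
      _ = 3 / x ^ 2 * (quarticConst * Real.exp (-x ^ 4 / 12)) := by ring

end QuarticAux

theorem quartic_mills_ratio_bound (x : ℝ) :
    (∫ t in Set.Ioi x, t * quarticDensity t) / quarticDensity x ≤ Real.sqrt (3 * π) / 2 ∧
    (x ≠ 0 → (∫ t in Set.Ioi x, t * quarticDensity t) / quarticDensity x ≤ 3 / x ^ 2) := by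
  have hP := QuarticAux.density_pos x
  rcases le_or_gt 0 x with hx | hx
  · obtain ⟨h1, h2⟩ := QuarticAux.main_bound hx
    exact ⟨(div_le_iff₀ hP).mpr h1, fun hxne => (div_le_iff₀ hP).mpr (h2 hxne)⟩
  · have hred := QuarticAux.odd_reduce hx
    obtain ⟨h1, h2⟩ := QuarticAux.main_bound (x := -x) (by linarith)
    rw [QuarticAux.density_even] at h1 h2
    rw [hred]
    have hxx : (-x) ^ 2 = x ^ 2 := by ring
    rw [hxx] at h2
    refine ⟨(div_le_iff₀ hP).mpr h1, fun _ => (div_le_iff₀ hP).mpr (h2 ?_)⟩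
    intro h
    exact absurd (by linarith : x = 0) (by linarith [hx])
end

section
/- Let f : ℝ → ℝ be differentiable with f(x)·e^{-x⁴/12} → 0 as x → -∞, and suppose f solves f'(x) - (x³/3)f(x) = h̃(x) where h̃ is bounded (so that f(x) = e^{x⁴/12}∫_{-∞}^x h̃(t)e^{-t⁴/12} dt). If additionally |f(x)| ≤ min(3^{1/4}Γ(1/4)/(2√2), 3/|x|³)·‖h̃‖ and g : ℝ → ℝ is differentiable solving g'(x) - (x³/3)g(x) = h'(x) + x²·f(x) with |g(x)| ≤ min(3^{1/4}Γ(1/4)/(2√2), 3/|x|³)·‖h' + x² f‖ for a Lipschitz h, and |f(x)| ≤ min(√(3π)/2, 3/x²)·‖h'‖, then ‖g‖ ≤ 2^{1/2}·3^{1/4}·Γ(1/4)·‖h'‖, and moreover |g(x)| ≤ min(2^{1/2}3^{1/4}Γ(1/4), 12/|x|³)·‖h'‖ for every x. -/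
open Real

theorem quartic_first_derivative_bound (f g h ht : ℝ → ℝ)
    (hfd : Differentiable ℝ f) (hgd : Differentiable ℝ g) (hhd : Differentiable ℝ h)
    (hlip : ∃ K : NNReal, LipschitzWith K h)
    (htend : Filter.Tendsto (fun x => f x * Real.exp (-x ^ 4 / 12)) Filter.atBot (nhds 0))
    (hbht : BddAbove (Set.range fun x => |ht x|))
    (hbrhs : BddAbove (Set.range fun x => |deriv h x + x ^ 2 * f x|))
    (hbh' : BddAbove (Set.range fun x => |deriv h x|))
    (heqf : ∀ x : ℝ, deriv f x - x ^ 3 / 3 * f x = ht x)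
    (hfb : ∀ x : ℝ, |f x| ≤
      min ((3 : ℝ) ^ ((1 : ℝ) / 4) * Real.Gamma (1 / 4) / (2 * Real.sqrt 2)) (3 / |x| ^ 3) *
        ⨆ y : ℝ, |ht y|)
    (heqg : ∀ x : ℝ, deriv g x - x ^ 3 / 3 * g x = deriv h x + x ^ 2 * f x)
    (hgb : ∀ x : ℝ, |g x| ≤
      min ((3 : ℝ) ^ ((1 : ℝ) / 4) * Real.Gamma (1 / 4) / (2 * Real.sqrt 2)) (3 / |x| ^ 3) *
        ⨆ y : ℝ, |deriv h y + y ^ 2 * f y|)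
    (hfb2 : ∀ x : ℝ, |f x| ≤ min (Real.sqrt (3 * π) / 2) (3 / x ^ 2) * ⨆ y : ℝ, |deriv h y|) :
    (⨆ x : ℝ, |g x|) ≤
        Real.sqrt 2 * (3 : ℝ) ^ ((1 : ℝ) / 4) * Real.Gamma (1 / 4) * ⨆ y : ℝ, |deriv h y| ∧
      ∀ x : ℝ, |g x| ≤
        min (Real.sqrt 2 * (3 : ℝ) ^ ((1 : ℝ) / 4) * Real.Gamma (1 / 4)) (12 / |x| ^ 3) *
          ⨆ y : ℝ, |deriv h y| := by

  have hcpos : 0 < (3 : ℝ) ^ ((1 : ℝ) / 4) * Real.Gamma (1 / 4) / (2 * Real.sqrt 2) := by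
    apply div_pos
    · exact mul_pos (Real.rpow_pos_of_pos (by norm_num) _)
        (Real.Gamma_pos_of_pos (by norm_num))
    · positivity
  have hH0 : 0 ≤ ⨆ y : ℝ, |deriv h y| := le_trans (abs_nonneg _) (le_ciSup hbh' 0)
  have hR : (⨆ y : ℝ, |deriv h y + y ^ 2 * f y|) ≤ 4 * ⨆ y : ℝ, |deriv h y| := by
    apply ciSup_le
    intro y
    have h1 : |deriv h y| ≤ ⨆ z : ℝ, |deriv h z| := le_ciSup hbh' y
    have h2 : y ^ 2 * |f y| ≤ 3 * ⨆ z : ℝ, |deriv h z| := by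
      calc y ^ 2 * |f y|
          ≤ y ^ 2 * (min (Real.sqrt (3 * π) / 2) (3 / y ^ 2) * ⨆ z : ℝ, |deriv h z|) :=
            mul_le_mul_of_nonneg_left (hfb2 y) (sq_nonneg y)
        _ = y ^ 2 * min (Real.sqrt (3 * π) / 2) (3 / y ^ 2) * ⨆ z : ℝ, |deriv h z| := by ring
        _ ≤ 3 * ⨆ z : ℝ, |deriv h z| := by
            apply mul_le_mul_of_nonneg_right _ hH0
            rcases eq_or_ne y 0 with h0 | h0
            · rw [h0]; norm_num
            · calc y ^ 2 * min (Real.sqrt (3 * π) / 2) (3 / y ^ 2)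
                  ≤ y ^ 2 * (3 / y ^ 2) :=
                    mul_le_mul_of_nonneg_left (min_le_right _ _) (sq_nonneg y)
                _ = 3 := by field_simp
    calc |deriv h y + y ^ 2 * f y| ≤ |deriv h y| + |y ^ 2 * f y| := abs_add_le _ _
      _ = |deriv h y| + y ^ 2 * |f y| := by rw [abs_mul, abs_pow, sq_abs]
      _ ≤ 4 * ⨆ z : ℝ, |deriv h z| := by linarith
  have hc4 : (3 : ℝ) ^ ((1 : ℝ) / 4) * Real.Gamma (1 / 4) / (2 * Real.sqrt 2) * 4
      = Real.sqrt 2 * (3 : ℝ) ^ ((1 : ℝ) / 4) * Real.Gamma (1 / 4) := by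
    have hs : Real.sqrt 2 * Real.sqrt 2 = 2 := Real.mul_self_sqrt (by norm_num)
    have hsp : (0 : ℝ) < Real.sqrt 2 := Real.sqrt_pos.mpr (by norm_num)
    rw [div_mul_eq_mul_div, div_eq_iff (by positivity : (2 * Real.sqrt 2) ≠ 0)]
    linear_combination (-2 * ((3 : ℝ) ^ ((1 : ℝ) / 4) * Real.Gamma (1 / 4))) * hs
  have key : ∀ x : ℝ, |g x| ≤
      min (Real.sqrt 2 * (3 : ℝ) ^ ((1 : ℝ) / 4) * Real.Gamma (1 / 4)) (12 / |x| ^ 3) *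
        ⨆ y : ℝ, |deriv h y| := by
    intro x
    have hmin0 : 0 ≤ min ((3 : ℝ) ^ ((1 : ℝ) / 4) * Real.Gamma (1 / 4) / (2 * Real.sqrt 2))
        (3 / |x| ^ 3) := le_min hcpos.le (by positivity)
    calc |g x| ≤ min ((3 : ℝ) ^ ((1 : ℝ) / 4) * Real.Gamma (1 / 4) / (2 * Real.sqrt 2))
          (3 / |x| ^ 3) * ⨆ y : ℝ, |deriv h y + y ^ 2 * f y| := hgb x
      _ ≤ min ((3 : ℝ) ^ ((1 : ℝ) / 4) * Real.Gamma (1 / 4) / (2 * Real.sqrt 2))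
          (3 / |x| ^ 3) * (4 * ⨆ y : ℝ, |deriv h y|) := mul_le_mul_of_nonneg_left hR hmin0
      _ = (min ((3 : ℝ) ^ ((1 : ℝ) / 4) * Real.Gamma (1 / 4) / (2 * Real.sqrt 2))
          (3 / |x| ^ 3) * 4) * ⨆ y : ℝ, |deriv h y| := by ring
      _ = min (Real.sqrt 2 * (3 : ℝ) ^ ((1 : ℝ) / 4) * Real.Gamma (1 / 4)) (12 / |x| ^ 3) *
          ⨆ y : ℝ, |deriv h y| := by
            rw [min_mul_of_nonneg _ _ (by norm_num : (0:ℝ) ≤ 4), hc4]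
            congr 1
            congr 1
            field_simp
            ring
  refine ⟨?_, key⟩
  apply ciSup_le
  intro x
  exact (key x).trans (mul_le_mul_of_nonneg_right (min_le_left _ _) hH0)
end

section
/- Let f : ℝ → ℝ be twice differentiable and suppose f satisfies the iterated Stein equation f''(x) - (x³/3)f'(x) = h'(x) + x²·f(x) for all x, with sup-norm bounds ‖f''‖ ≤ 2·‖h' + x²f‖ (where x²f denotes x ↦ x²f(x)) and |f(x)| ≤ min(√(3π)/2, 3/x²)·‖h'‖ for all x. Then ‖f''‖ ≤ 8·‖h'‖. -/
open Real

theorem quartic_second_derivative_bound (f h : ℝ → ℝ)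
    (hfd : Differentiable ℝ f) (hfd2 : Differentiable ℝ (deriv f)) (hhd : Differentiable ℝ h)
    (hbrhs : BddAbove (Set.range fun x => |deriv h x + x ^ 2 * f x|))
    (hbh' : BddAbove (Set.range fun x => |deriv h x|))
    (heq : ∀ x : ℝ, deriv (deriv f) x - x ^ 3 / 3 * deriv f x = deriv h x + x ^ 2 * f x)
    (hf'' : (⨆ x : ℝ, |deriv (deriv f) x|) ≤ 2 * ⨆ x : ℝ, |deriv h x + x ^ 2 * f x|)
    (hfb : ∀ x : ℝ, |f x| ≤ min (Real.sqrt (3 * π) / 2) (3 / x ^ 2) * ⨆ y : ℝ, |deriv h y|) :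
    (⨆ x : ℝ, |deriv (deriv f) x|) ≤ 8 * ⨆ x : ℝ, |deriv h x| := by
  set H : ℝ := ⨆ y : ℝ, |deriv h y| with hH
  have hle : ∀ x : ℝ, |deriv h x| ≤ H := fun x => le_ciSup hbh' x
  have hH0 : 0 ≤ H := le_trans (abs_nonneg _) (hle 0)
  have hmid : (⨆ x : ℝ, |deriv h x + x ^ 2 * f x|) ≤ 4 * H := by
    apply ciSup_le
    intro x
    have h1 : |deriv h x + x ^ 2 * f x| ≤ |deriv h x| + x ^ 2 * |f x| := by
      calc |deriv h x + x ^ 2 * f x| ≤ |deriv h x| + |x ^ 2 * f x| := abs_add_le _ _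
        _ = |deriv h x| + x ^ 2 * |f x| := by
            rw [abs_mul, abs_of_nonneg (sq_nonneg x)]
    have h2 : x ^ 2 * |f x| ≤ 3 * H := by
      have := hfb x
      have h3 : x ^ 2 * (min (Real.sqrt (3 * π) / 2) (3 / x ^ 2)) ≤ 3 := by
        rcases eq_or_ne x 0 with rfl | hx
        · simp
        · have hx2 : (0:ℝ) < x ^ 2 := by positivity
          calc x ^ 2 * (min (Real.sqrt (3 * π) / 2) (3 / x ^ 2))
              ≤ x ^ 2 * (3 / x ^ 2) := by
                apply mul_le_mul_of_nonneg_left (min_le_right _ _) hx2.le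
            _ = 3 := by field_simp
      calc x ^ 2 * |f x| ≤ x ^ 2 * (min (Real.sqrt (3 * π) / 2) (3 / x ^ 2) * H) :=
            mul_le_mul_of_nonneg_left (hfb x) (sq_nonneg x)
        _ = x ^ 2 * min (Real.sqrt (3 * π) / 2) (3 / x ^ 2) * H := by ring
        _ ≤ 3 * H := mul_le_mul_of_nonneg_right h3 hH0
    calc |deriv h x + x ^ 2 * f x| ≤ |deriv h x| + x ^ 2 * |f x| := h1
      _ ≤ H + 3 * H := add_le_add (hle x) h2
      _ = 4 * H := by ring
  calc (⨆ x : ℝ, |deriv (deriv f) x|) ≤ 2 * ⨆ x : ℝ, |deriv h x + x ^ 2 * f x| := hf''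
    _ ≤ 2 * (4 * H) := by linarith
    _ = 8 * H := by ring
end
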